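/- Sampling with replacement uniformly from a set of n elements (independently, a Binomial(n,p)-distributed number k of times, collecting the multiset of samples) and sampling without replacement the same Binomial(n,p)-distributed number of times have total variation distance at most p(1−p) + np², as distributions on subsets/multisets of the ground set. -/

import Mathlib

open scoped ENNReal

/-- Total variation distance between two p.m.f.s on a countable space (real valued). -/
noncomputable def tvPMF {α : Type*} (μ ν : PMF α) : ℝ :=
  (∑' x, |(μ x).toReal - (ν x).toReal|) / 2

/-- Sampling with replacement: `k` independent uniform draws from `Fin n`, collected as a
multiset. -/
noncomputable def withRep (n : ℕ) (hn : 0 < n) (k : ℕ) : PMF (Multiset (Fin n)) :=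
  haveI : Nonempty (Fin n) := ⟨⟨0, hn⟩⟩
  (PMF.uniformOfFintype (Fin k → Fin n)).map
    (fun f => ((List.ofFn f : List (Fin n)) : Multiset (Fin n)))

/-- Sampling without replacement: a uniformly random `k`-subset of `Fin n`, as a multiset. -/
noncomputable def withoutRep (n : ℕ) (k : ℕ) (hk : k ≤ n) : PMF (Multiset (Fin n)) :=
  (PMF.uniformOfFinset
    ((Finset.univ : Finset (Finset (Fin n))).filter (fun t => t.card = k))
    (by
      obtain ⟨t, _, ht⟩ := Finset.exists_subset_card_eq
        (s := (Finset.univ : Finset (Fin n))) (n := k) (by simpa using hk)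
      exact ⟨t, by simp [ht]⟩)).map (fun s => (s.val : Multiset (Fin n)))

/-! Given the number `k` of draws, with-replacement sampling puts mass at most
`k! / n ^ k ≤ 1 / (n choose k)` on every `k`-subset, which is exactly the mass that
without-replacement sampling puts there. So the total variation distance between the two is at
most the probability that the `k` draws collide, which a union bound over ordered pairs of draws
bounds by `k (k - 1) / n`. Total variation distance is convex under mixing, so averaging over
`k ~ Binomial(n, p)` gives at most `E[k (k - 1)] / n = (n - 1) p ^ 2`. -/

open Finset

section TotalVariation

variable {α β : Type*}

lemma ENNReal.abs_toReal_sub {a b : ℝ≥0∞} (ha : a ≠ ∞) (hb : b ≠ ∞) :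
    |a.toReal - b.toReal| = ((a - b) + (b - a)).toReal := by
  rcases le_total a b with h | h
  · rw [tsub_eq_zero_of_le h, zero_add, abs_sub_comm, ENNReal.toReal_sub_of_le h hb,
      abs_of_nonneg (sub_nonneg.2 (ENNReal.toReal_mono hb h))]
  · rw [tsub_eq_zero_of_le h, add_zero, ENNReal.toReal_sub_of_le h ha,
      abs_of_nonneg (sub_nonneg.2 (ENNReal.toReal_mono ha h))]

lemma PMF.tsum_tsub_comm (μ ν : PMF α) : ∑' x, (μ x - ν x) = ∑' x, (ν x - μ x) := by
  have split : ∀ μ ν : PMF α, ∑' x, (μ x - ν x) + ∑' x, min (μ x) (ν x) = 1 := by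
    intro μ ν
    simp only [← ENNReal.tsum_add, tsub_add_min, μ.tsum_coe]
  have hmin : ∑' x, min (μ x) (ν x) ≠ ∞ :=
    ne_top_of_le_ne_top ENNReal.one_ne_top
      ((ENNReal.tsum_le_tsum fun x => min_le_left _ _).trans μ.tsum_coe.le)
  rw [← ENNReal.add_left_inj hmin, split, funext fun x => min_comm (μ x) (ν x), split]

lemma tvPMF_eq_toReal_tsum_tsub (μ ν : PMF α) :
    tvPMF μ ν = (∑' x, (μ x - ν x)).toReal := by
  have hfin : ∀ x, (μ x - ν x) + (ν x - μ x) ≠ ∞ := fun x =>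
    ENNReal.add_ne_top.2 ⟨ne_top_of_le_ne_top (μ.apply_ne_top x) tsub_le_self,
      ne_top_of_le_ne_top (ν.apply_ne_top x) tsub_le_self⟩
  rw [tvPMF, tsum_congr fun x => ENNReal.abs_toReal_sub (μ.apply_ne_top x) (ν.apply_ne_top x),
    ← ENNReal.tsum_toReal_eq hfin, ENNReal.tsum_add, ← PMF.tsum_tsub_comm, ← two_mul,
    ENNReal.toReal_mul, ENNReal.toReal_ofNat]
  ring

lemma PMF.tsum_bind_tsub_le (p : PMF α) (f g : α → PMF β) :
    ∑' x, (p.bind f x - p.bind g x) ≤ ∑' a, p a * ∑' x, (f a x - g a x) := by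
  simp only [← ENNReal.tsum_mul_left]
  rw [ENNReal.tsum_comm]
  refine ENNReal.tsum_le_tsum fun x => ?_
  rw [PMF.bind_apply, PMF.bind_apply, tsub_le_iff_right, ← ENNReal.tsum_add]
  refine ENNReal.tsum_le_tsum fun a => ?_
  rw [← mul_add]
  gcongr
  exact le_tsub_add

lemma PMF.tsum_tsub_le_toOuterMeasure_compl (μ ν : PMF α) {S : Set α}
    (h : ∀ x ∈ S, μ x ≤ ν x) : ∑' x, (μ x - ν x) ≤ μ.toOuterMeasure Sᶜ := by
  rw [PMF.toOuterMeasure_apply]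
  refine ENNReal.tsum_le_tsum fun x => ?_
  by_cases hx : x ∈ S
  · simp [tsub_eq_zero_of_le (h x hx)]
  · simp [Set.indicator_of_mem (Set.mem_compl hx)]

end TotalVariation

section Collisions

variable {α : Type*} [Fintype α] [DecidableEq α]

lemma card_filter_apply_eq_apply_mul_le {k : ℕ} {i j : Fin k} (hij : i ≠ j) :
    #{f : Fin k → α | f i = f j} * Fintype.card α ≤ Fintype.card α ^ k := by
  have hcard : Fintype.card α ^ k = #(univ : Finset (Fin k → α)) := by simp
  rw [hcard, ← Finset.card_univ, ← Finset.card_product]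
  refine Finset.card_le_card_of_injOn (fun fa => Function.update fa.1 j fa.2)
    (fun _ _ => Finset.mem_coe.2 (Finset.mem_univ _)) ?_
  rintro ⟨f, a⟩ hf ⟨g, b⟩ hg hfg
  simp only [Finset.coe_product, Set.mem_prod, Finset.mem_coe, Finset.mem_filter,
    Finset.mem_univ, true_and, and_true] at hf hg hfg
  have hab : a = b := by simpa using congrFun hfg j
  have hfi : f i = g i := by simpa [hij] using congrFun hfg i
  subst hab
  refine Prod.ext (funext fun x => ?_) rfl
  rcases eq_or_ne x j with rfl | hx
  · exact hf.symm.trans (hfi.trans hg)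
  · simpa [hx] using congrFun hfg x

lemma PMF.uniformOfFintype_toOuterMeasure_apply_eq_apply_le [Nonempty α] {k : ℕ} {i j : Fin k}
    (hij : i ≠ j) :
    (PMF.uniformOfFintype (Fin k → α)).toOuterMeasure {f | f i = f j}
      ≤ (Fintype.card α : ℝ≥0∞)⁻¹ := by
  have hn : (Fintype.card α : ℝ≥0∞) ≠ 0 := by simp
  simp only [PMF.toOuterMeasure_uniformOfFintype_apply, Set.coe_ofPred, Fintype.card_subtype,
    Fintype.card_fun, Fintype.card_fin]
  rw [ENNReal.div_le_iff (by simp) (by simp), ← ENNReal.div_eq_inv_mul,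
    ENNReal.le_div_iff_mul_le (Or.inl hn) (Or.inl (by simp))]
  exact_mod_cast card_filter_apply_eq_apply_mul_le hij

lemma PMF.uniformOfFintype_toOuterMeasure_not_injective_le [Nonempty α] (k : ℕ) :
    (PMF.uniformOfFintype (Fin k → α)).toOuterMeasure {f | ¬ Function.Injective f}
      ≤ ((k * (k - 1) : ℕ) : ℝ≥0∞) / Fintype.card α := by
  have hcover : {f : Fin k → α | ¬ Function.Injective f}
      ⊆ ⋃ ij ∈ (univ : Finset (Fin k)).offDiag, {f | f ij.1 = f ij.2} := by
    intro f hf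
    obtain ⟨i, j, hfij, hij⟩ := Function.not_injective_iff.1 hf
    exact Set.mem_biUnion (x := (i, j)) (by simpa using hij) hfij
  calc _ ≤ _ := MeasureTheory.measure_mono hcover
    _ ≤ ∑ ij ∈ (univ : Finset (Fin k)).offDiag,
          (PMF.uniformOfFintype (Fin k → α)).toOuterMeasure {f | f ij.1 = f ij.2} :=
        MeasureTheory.measure_biUnion_finset_le _ _
    _ ≤ ∑ _ij ∈ (univ : Finset (Fin k)).offDiag, (Fintype.card α : ℝ≥0∞)⁻¹ :=
        Finset.sum_le_sum fun ij hij =>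
          PMF.uniformOfFintype_toOuterMeasure_apply_eq_apply_le (Finset.mem_offDiag.1 hij).2.2
    _ = ((k * (k - 1) : ℕ) : ℝ≥0∞) / Fintype.card α := by
        rw [Finset.sum_const, Finset.offDiag_card, nsmul_eq_mul, div_eq_mul_inv, Nat.mul_sub_one]
        simp

lemma card_filter_ofFn_eq_le {k : ℕ} (s : Multiset α) :
    #{f : Fin k → α | (List.ofFn f : Multiset α) = s} ≤ s.card.factorial := by
  calc _ ≤ #s.toList.permutations.toFinset := by
        refine Finset.card_le_card_of_injOn (fun f => List.ofFn f) (fun f hf => ?_)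
          (fun f _ g _ h => List.ofFn_injective h)
        simp only [Finset.coe_filter, Set.mem_ofPred_eq, Finset.mem_univ, true_and] at hf
        rw [Finset.mem_coe, List.mem_toFinset, List.mem_permutations, ← Multiset.coe_eq_coe,
          Multiset.coe_toList, hf]
    _ ≤ s.toList.permutations.length := List.toFinset_card_le _
    _ = s.card.factorial := by rw [List.length_permutations, Multiset.length_toList]

end Collisions

section Sampling

variable {n k : ℕ}

lemma withRep_apply (hn : 0 < n) (s : Multiset (Fin n)) :
    withRep n hn k s = #{f : Fin k → Fin n | (List.ofFn f : Multiset (Fin n)) = s} / n ^ k := by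
  classical
  have : Nonempty (Fin n) := ⟨⟨0, hn⟩⟩
  rw [← PMF.toOuterMeasure_apply_singleton, withRep, PMF.toOuterMeasure_map_apply,
    PMF.toOuterMeasure_uniformOfFintype_apply]
  simp

lemma withoutRep_apply_val (hk : k ≤ n) {t : Finset (Fin n)} (ht : t.card = k) :
    withoutRep n k hk t.val = (n.choose k : ℝ≥0∞)⁻¹ := by
  have hpre : Finset.val ⁻¹' {t.val} = ({t} : Set (Finset (Fin n))) := by
    ext u
    simp [Finset.val_inj]
  have hsubsets : #{u : Finset (Fin n) | u.card = k} = n.choose k := by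
    rw [← Finset.powerset_univ, ← Finset.powersetCard_eq_filter, Finset.card_powersetCard,
      Finset.card_univ, Fintype.card_fin]
  have hmem : t ∈ ({u : Finset (Fin n) | u.card = k} : Finset _) := by simpa using ht
  rw [← PMF.toOuterMeasure_apply_singleton, withoutRep, PMF.toOuterMeasure_map_apply, hpre,
    PMF.toOuterMeasure_apply_singleton, PMF.uniformOfFinset_apply_of_mem _ hmem,
    hsubsets]

lemma withRep_val_le_withoutRep_val (hn : 0 < n) (hk : k ≤ n) {t : Finset (Fin n)}
    (ht : t.card = k) :
    withRep n hn k t.val ≤ withoutRep n k hk t.val := by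
  have hcount : #{f : Fin k → Fin n | (List.ofFn f : Multiset (Fin n)) = t.val} * n.choose k
      ≤ n ^ k :=
    calc _ ≤ k.factorial * n.choose k := by
          gcongr
          simpa [ht] using card_filter_ofFn_eq_le (k := k) t.val
      _ = n.descFactorial k := (Nat.descFactorial_eq_factorial_mul_choose n k).symm
      _ ≤ n ^ k := Nat.descFactorial_le_pow n k
  rw [withRep_apply, withoutRep_apply_val hk ht, ENNReal.le_inv_iff_mul_le,
    ← ENNReal.mul_div_right_comm]
  refine ENNReal.div_le_of_le_mul ?_
  rw [one_mul]
  exact_mod_cast hcount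

lemma withRep_toOuterMeasure_compl_le (hn : 0 < n) :
    (withRep n hn k).toOuterMeasure (Finset.val '' {t | t.card = k})ᶜ
      ≤ ((k * (k - 1) : ℕ) : ℝ≥0∞) / n := by
  have : Nonempty (Fin n) := ⟨⟨0, hn⟩⟩
  have hcollision : (fun f : Fin k → Fin n => (List.ofFn f : Multiset (Fin n))) ⁻¹'
      (Finset.val '' {t | t.card = k})ᶜ ⊆ {f | ¬ Function.Injective f} := by
    intro f hf hinj
    exact hf ⟨⟨_, Multiset.coe_nodup.2 (List.nodup_ofFn.2 hinj)⟩, by simp, rfl⟩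
  rw [withRep, PMF.toOuterMeasure_map_apply]
  calc _ ≤ _ := MeasureTheory.measure_mono hcollision
    _ ≤ _ := PMF.uniformOfFintype_toOuterMeasure_not_injective_le k
    _ = _ := by rw [Fintype.card_fin]

lemma tsum_withRep_tsub_withoutRep_le (hn : 0 < n) (hk : k ≤ n) :
    ∑' s, (withRep n hn k s - withoutRep n k hk s)
      ≤ ((k * (k - 1) : ℕ) : ℝ≥0∞) / n := by
  refine (PMF.tsum_tsub_le_toOuterMeasure_compl _ _ ?_).trans (withRep_toOuterMeasure_compl_le hn)
  rintro _ ⟨t, ht, rfl⟩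
  exact withRep_val_le_withoutRep_val hn hk ht

end Sampling

lemma Nat.choose_add_two_mul (m j : ℕ) :
    (m + 2).choose (j + 2) * ((j + 2) * (j + 1)) = (m + 2) * (m + 1) * m.choose j := by
  have h₁ := Nat.add_one_mul_choose_eq (m + 1) (j + 1)
  have h₂ := Nat.add_one_mul_choose_eq m j
  calc (m + 2).choose (j + 2) * ((j + 2) * (j + 1))
      = (m + 2) * ((m + 1).choose (j + 1) * (j + 1)) := by rw [← mul_assoc, ← h₁]; ring
    _ = (m + 2) * (m + 1) * m.choose j := by rw [← h₂]; ring

lemma sum_range_pow_mul_pow_mul_choose_mul_mul_pred {R : Type*} [CommSemiring R] (x y : R)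
    (n : ℕ) :
    ∑ i ∈ range (n + 1), x ^ i * y ^ (n - i) * (n.choose i : R) * ((i * (i - 1) : ℕ) : R)
      = ((n * (n - 1) : ℕ) : R) * x ^ 2 * (x + y) ^ (n - 2) := by
  match n with
  | 0 => simp
  | 1 => simp [Finset.sum_range_succ]
  | m + 2 =>
    rw [Finset.sum_range_succ', Finset.sum_range_succ', add_pow, Finset.mul_sum]
    simp only [Nat.add_sub_cancel, zero_tsub, mul_zero, Nat.cast_zero, add_zero, tsub_self]
    refine Finset.sum_congr rfl fun j _ => ?_
    have hchoose : ((m + 2).choose (j + 2) : R) * ((j + 2) * (j + 1) : ℕ)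
        = ((m + 2) * (m + 1) : ℕ) * m.choose j := by
      rw [← Nat.cast_mul, ← Nat.cast_mul, Nat.choose_add_two_mul]
    rw [show m + 2 - 1 = m + 1 from rfl, Nat.add_sub_add_right,
      mul_assoc _ ((m + 2).choose (j + 2) : R), hchoose]
    ring

lemma PMF.sum_binomial_mul_mul_pred (q : NNReal) (hq : q ≤ 1) (n : ℕ) :
    ∑ i : Fin (n + 1), PMF.binomial q hq n i * ((i * (i - 1) : ℕ) : ℝ≥0∞)
      = ((n * (n - 1) : ℕ) : ℝ≥0∞) * (q : ℝ≥0∞) ^ 2 := by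
  have key := sum_range_pow_mul_pow_mul_choose_mul_mul_pred q (1 - q) n
  rw [add_tsub_cancel_of_le hq, one_pow, mul_one, ← Fin.sum_univ_eq_sum_range] at key
  simp only [PMF.binomial_apply, Fin.val_last]
  exact_mod_cast key

lemma tsum_binomial_bind_withRep_tsub_withoutRep_le {n : ℕ} (hn : 0 < n) (q : NNReal)
    (hq : q ≤ 1) :
    ∑' s, ((PMF.binomial q hq n).bind (fun k => withRep n hn k) s
      - (PMF.binomial q hq n).bind (fun k => withoutRep n k (Nat.lt_succ_iff.mp k.isLt)) s)
      ≤ n * (q : ℝ≥0∞) ^ 2 :=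
  calc _ ≤ ∑' k : Fin (n + 1),
          PMF.binomial q hq n k * (((k * (k - 1) : ℕ) : ℝ≥0∞) / n) := by
        refine (PMF.tsum_bind_tsub_le _ _ _).trans (ENNReal.tsum_le_tsum fun k => ?_)
        gcongr
        exact tsum_withRep_tsub_withoutRep_le hn _
    _ = ((n * (n - 1) : ℕ) : ℝ≥0∞) * (q : ℝ≥0∞) ^ 2 / n := by
        simp only [tsum_fintype, div_eq_mul_inv, ← mul_assoc, ← Finset.sum_mul]
        rw [PMF.sum_binomial_mul_mul_pred]
    _ ≤ n * (q : ℝ≥0∞) ^ 2 := by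
        refine ENNReal.div_le_of_le_mul ?_
        rw [mul_right_comm]
        gcongr
        exact_mod_cast Nat.mul_le_mul_left n (Nat.sub_le n 1)

/-- Drawing a `Binomial(n,p)` number of samples with replacement versus without replacement
from `[n]` gives distributions (on multisets) within total variation `p(1−p) + np²`. -/
theorem stmt9 (n : ℕ) (hn : 0 < n) (p : ℝ≥0∞) (hp : p ≤ 1) :
    tvPMF
      ((PMF.binomial p.toNNReal (by simpa using ENNReal.toNNReal_mono ENNReal.one_ne_top hp) n).bind (fun k => withRep n hn (k : ℕ)))
      ((PMF.binomial p.toNNReal (by simpa using ENNReal.toNNReal_mono ENNReal.one_ne_top hp) n).bind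
        (fun k => withoutRep n (k : ℕ) (Nat.lt_succ_iff.mp k.isLt)))
      ≤ p.toReal * (1 - p.toReal) + (n : ℝ) * p.toReal ^ 2 := by
  have hp_top : p ≠ ∞ := ne_top_of_le_ne_top ENNReal.one_ne_top hp
  have hp_le : p.toReal ≤ 1 := ENNReal.toReal_le_of_le_ofReal zero_le_one (by simpa using hp)
  have hbound : ((n : ℝ≥0∞) * (p.toNNReal : ℝ≥0∞) ^ 2).toReal = n * p.toReal ^ 2 := by
    rw [ENNReal.coe_toNNReal hp_top, ENNReal.toReal_mul, ENNReal.toReal_pow,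
      ENNReal.toReal_natCast]
  rw [tvPMF_eq_toReal_tsum_tsub]
  calc _ ≤ ((n : ℝ≥0∞) * (p.toNNReal : ℝ≥0∞) ^ 2).toReal :=
        ENNReal.toReal_mono (by finiteness) (tsum_binomial_bind_withRep_tsub_withoutRep_le hn _ _)
    _ = n * p.toReal ^ 2 := hbound
    _ ≤ p.toReal * (1 - p.toReal) + (n : ℝ) * p.toReal ^ 2 := by
        nlinarith [ENNReal.toReal_nonneg (a := p)]
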